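/- For every planar rooted tree T and every n ≥ 1, there is a natural bijection between the set of FPT-morphisms from B_n to T and the set of tuples of distinct vertices (v, v_1, ..., v_n) of T such that v_i ≤ v in the tree order for every i, the v_i are pairwise incomparable in the tree order, and v_1 ◁ v_2 ◁ ... ◁ v_n in the depth-first order. -/
import Mathlib

/-- A finite rooted tree, encoded as a finite partial order (the tree order,
with the root as maximum element) in which the set of elements above any
vertex is a chain (the path from the vertex to the root). -/
structure RTree where
  V : Type
  finite : Finite V
  le : V → V → Prop
  le_refl : ∀ v, le v v
  le_antisymm : ∀ v w, le v w → le w v → v = w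
  le_trans : ∀ u v w, le u v → le v w → le u w
  root : V
  le_root : ∀ v, le v root
  up_total : ∀ u v w, le u v → le u w → le v w ∨ le w v

/-- A planar rooted tree: a rooted tree together with its depth-first ordering,
a linear order on the vertices arising from the total orderings of the incoming
edges at each vertex via a clockwise depth-first tree walk.  Such linear orders
are exactly those in which ancestors precede descendants and every principal
downset of the tree order is an interval. -/
structure PRTree extends RTree where
  dfle : V → V → Prop
  dfle_refl : ∀ v, dfle v v
  dfle_antisymm : ∀ v w, dfle v w → dfle w v → v = w
  dfle_trans : ∀ u v w, dfle u v → dfle v w → dfle u w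
  dfle_total : ∀ v w, dfle v w ∨ dfle w v
  dfle_of_le : ∀ v w, le v w → dfle w v
  downset_interval : ∀ u a b c, le a u → le c u → dfle a b → dfle b c → le b u

/-- A morphism in the category `FPT`: an order embedding of vertex sets which
preserves the depth-first ordering (but need not preserve the root). -/
structure FPTHom (T U : PRTree) where
  toFun : T.V → U.V
  inj : Function.Injective toFun
  map_le : ∀ v w, T.le v w → U.le (toFun v) (toFun w)
  reflect_le : ∀ v w, U.le (toFun v) (toFun w) → T.le v w
  map_dfle : ∀ v w, T.dfle v w → U.dfle (toFun v) (toFun w)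

def FPTHom.comp {T U W : PRTree} (g : FPTHom U W) (f : FPTHom T U) :
    FPTHom T W where
  toFun := fun v => g.toFun (f.toFun v)
  inj := fun _ _ h => f.inj (g.inj h)
  map_le := fun v w h => g.map_le _ _ (f.map_le v w h)
  reflect_le := fun v w h => f.reflect_le _ _ (g.reflect_le _ _ h)
  map_dfle := fun v w h => g.map_dfle _ _ (f.map_dfle v w h)

/-- The planar rooted tree `B_n`, with root `0` and `n` leaves `1, …, n`
each joined to the root by an edge, in their natural planar order. -/
def Bn (n : ℕ) : PRTree where
  V := Fin (n + 1)
  finite := inferInstance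
  le a b := a = b ∨ b = 0
  le_refl _ := Or.inl rfl
  le_antisymm := by
    rintro a b (rfl | rfl) h
    · rfl
    · rcases h with h | h
      · exact h.symm
      · exact h
  le_trans := by
    rintro a b c (rfl | rfl) h
    · exact h
    · rcases h with h | h
      · exact Or.inr h.symm
      · exact Or.inr h
  root := 0
  le_root _ := Or.inr rfl
  up_total := by
    rintro u v w (rfl | rfl) (rfl | rfl)
    · exact Or.inl (Or.inl rfl)
    · exact Or.inl (Or.inr rfl)
    · exact Or.inr (Or.inr rfl)
    · exact Or.inl (Or.inl rfl)
  dfle a b := a ≤ b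
  dfle_refl a := le_refl a
  dfle_antisymm a b h h' := le_antisymm h h'
  dfle_trans a b c h h' := le_trans h h'
  dfle_total a b := le_total a b
  dfle_of_le := by
    rintro v w (rfl | rfl)
    · exact le_refl v
    · exact Fin.zero_le v
  downset_interval := by
    rintro u a b c (rfl | rfl) hc hab hbc
    · rcases hc with rfl | rfl
      · exact Or.inl (le_antisymm hbc hab)
      · exact Or.inr rfl
    · exact Or.inr rfl

/-- The root vertex of `B_n`. -/
def BnRoot (n : ℕ) : (Bn n).V := (0 : Fin (n + 1))

/-- The `i`-th leaf of `B_n`. -/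
def BnLeaf (n : ℕ) (i : Fin n) : (Bn n).V := i.succ

lemma FPTHom.ext' {T U : PRTree} {f g : FPTHom T U}
    (h : ∀ v, f.toFun v = g.toFun v) : f = g := by
  cases f; cases g
  have : _ = _ := funext h
  simp_all

/-- The inverse construction: from a tuple to a morphism `Bₙ → T`. -/
def homOfTuple (n : ℕ) (T : PRTree)
    (p : {p : T.V × (Fin n → T.V) //
          (∀ i, p.2 i ≠ p.1) ∧
          (∀ i j : Fin n, i ≠ j → p.2 i ≠ p.2 j) ∧
          (∀ i, T.le (p.2 i) p.1) ∧
          (∀ i j : Fin n, i ≠ j → ¬ T.le (p.2 i) (p.2 j)) ∧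
          (∀ i j : Fin n, i < j → T.dfle (p.2 i) (p.2 j))}) :
    FPTHom (Bn n) T where
  toFun := fun a => Fin.cases p.1.1 p.1.2 a
  inj := by
    obtain ⟨⟨v, f⟩, h1, h2, h3, h4, h5⟩ := p
    intro a b h
    induction a using Fin.cases with
    | zero =>
      induction b using Fin.cases with
      | zero => rfl
      | succ j => exact absurd h.symm (h1 j)
    | succ i =>
      induction b using Fin.cases with
      | zero => exact absurd h (h1 i)
      | succ j =>
        by_contra hne
        exact h2 i j (fun hij => hne (by rw [hij])) h
  map_le := by
    obtain ⟨⟨v, f⟩, h1, h2, h3, h4, h5⟩ := p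
    intro a b hab
    rcases hab with rfl | rfl
    · exact T.le_refl _
    · induction a using Fin.cases with
      | zero => exact T.le_refl _
      | succ i => exact h3 i
  reflect_le := by
    obtain ⟨⟨v, f⟩, h1, h2, h3, h4, h5⟩ := p
    intro a b h
    induction b using Fin.cases with
    | zero => exact Or.inr rfl
    | succ j =>
      induction a using Fin.cases with
      | zero =>
        exact absurd (T.le_antisymm _ _ (h3 j) h) (h1 j)
      | succ i =>
        by_cases hij : i = j
        · exact Or.inl (by rw [hij])
        · exact absurd h (h4 i j hij)
  map_dfle := by
    obtain ⟨⟨v, f⟩, h1, h2, h3, h4, h5⟩ := p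
    intro a b hab
    induction a using Fin.cases with
    | zero =>
      induction b using Fin.cases with
      | zero => exact T.dfle_refl _
      | succ j => exact T.dfle_of_le _ _ (h3 j)
    | succ i =>
      induction b using Fin.cases with
      | zero => exact absurd hab (by simp [Bn, Fin.le_def])
      | succ j =>
        have hij : i ≤ j := by
          have : (i.succ : Fin (n+1)) ≤ j.succ := hab
          exact Fin.succ_le_succ_iff.mp this
        rcases lt_or_eq_of_le hij with hlt | rfl
        · exact h5 i j hlt
        · exact T.dfle_refl _

/-- For every planar rooted tree `T` and every `n ≥ 1`, the `FPT`-morphisms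
`Bₙ → T` are in natural bijection with the tuples of distinct vertices
`(v, v₁, …, vₙ)` of `T` such that each `vᵢ ≤ v` in the tree order, the `vᵢ`
are pairwise incomparable in the tree order, and `v₁ ◁ v₂ ◁ ⋯ ◁ vₙ` in the
depth-first order; the bijection sends `φ` to the images of the root and of
the leaves of `Bₙ`. -/
theorem hom_from_Bn_bijection (n : ℕ) (hn : 1 ≤ n) (T : PRTree) :
    ∃ e : FPTHom (Bn n) T ≃
        {p : T.V × (Fin n → T.V) //
          (∀ i, p.2 i ≠ p.1) ∧
          (∀ i j : Fin n, i ≠ j → p.2 i ≠ p.2 j) ∧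
          (∀ i, T.le (p.2 i) p.1) ∧
          (∀ i j : Fin n, i ≠ j → ¬ T.le (p.2 i) (p.2 j)) ∧
          (∀ i j : Fin n, i < j → T.dfle (p.2 i) (p.2 j))},
      ∀ φ : FPTHom (Bn n) T,
        (e φ).1.1 = φ.toFun (BnRoot n) ∧
        ∀ i : Fin n, (e φ).1.2 i = φ.toFun (BnLeaf n i) := by
  refine ⟨{
    toFun := fun φ => ⟨(φ.toFun (BnRoot n), fun i => φ.toFun (BnLeaf n i)), ?_, ?_, ?_, ?_, ?_⟩
    invFun := homOfTuple n T
    left_inv := ?_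
    right_inv := ?_ }, fun φ => ⟨rfl, fun i => rfl⟩⟩
  · intro i h
    have := φ.inj h
    exact Fin.succ_ne_zero i this
  · intro i j hij h
    exact hij (Fin.succ_injective n (φ.inj h))
  · intro i
    exact φ.map_le _ _ (Or.inr rfl)
  · intro i j hij h
    rcases φ.reflect_le _ _ h with h' | h'
    · exact hij (Fin.succ_injective n h')
    · exact Fin.succ_ne_zero j h'
  · intro i j hij
    exact φ.map_dfle _ _ (Fin.succ_le_succ_iff.mpr hij.le)
  · intro φ
    apply FPTHom.ext'
    intro a
    induction a using Fin.cases with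
    | zero => rfl
    | succ i => rfl
  · intro p
    apply Subtype.ext
    apply Prod.ext
    · rfl
    · funext i; rfl
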